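/- Let τ, τ' ∈ ℍ and μ ∈ M₂(ℝ) with τ'(τ,1)ᵗ = μ(τ,1)ᵗ. Let ρ: ℤτ' + ℤ → GL₃(ℂ) be given by ρ(mτ'+n) = ((1,0,0),(0,1,0),(−mμ₁₁−n, −mμ₂₁, 1)). Then the space of holomorphic maps f = (f₁,f₂,f₃): ℂ → ℂ³ satisfying f(z + mτ' + n) = ρ(mτ'+n)·f(z) for all m,n ∈ ℤ is exactly 2-dimensional: it consists of all f of the form (f₁, f₂, −f₁ z + b) where b ∈ ℂ and (f₁,f₂)ᵗ is an eigenvector (possibly zero) of μᵗ with eigenvalue τ'. -/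

import Mathlib

/-!
The first two components of a solution are entire and doubly periodic for the lattice
`ℤτ' + ℤ`, so they take all their values on a compact fundamental parallelogram and are
constant by Liouville. The third component then changes by a constant under every period, so
its derivative is doubly periodic, hence constant, and the component is affine, `a z + b`.
Translating by `1` gives `a = -f₁`, translating by `τ'` gives `τ' f₁ = μ₁₁ f₁ + μ₂₁ f₂`, and
the second eigenvector equation follows because `(τ, 1)` is an eigenvector of `μ`. As `τ'` is
not real, `μ₂₁ ≠ 0`, and the solutions are spanned by `(μ₂₁, τ' - μ₁₁, -μ₂₁ z)` and `(0, 0, 1)`.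
-/

/-- `f : ℂ → ℂ³` is holomorphic and transforms under the lattice `ℤτ' + ℤ`
according to the factor of automorphy `ρ`. -/
def SatisfiesRho (τ' : ℂ) (μ : Matrix (Fin 2) (Fin 2) ℝ) (f : ℂ → ℂ × ℂ × ℂ) : Prop :=
  Differentiable ℂ f ∧ ∀ m n : ℤ, ∀ z : ℂ,
    (f (z + m * τ' + n)).1 = (f z).1 ∧
    (f (z + m * τ' + n)).2.1 = (f z).2.1 ∧
    (f (z + m * τ' + n)).2.2
      = -((m : ℂ) * (μ 0 0 : ℂ) + (n : ℂ)) * (f z).1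
        - (m : ℂ) * (μ 1 0 : ℂ) * (f z).2.1 + (f z).2.2

namespace PeriodPair

variable (L : PeriodPair) {F : Type*} [NormedAddCommGroup F] [NormedSpace ℂ F]

theorem apply_eq_apply_of_differentiable {f : ℂ → F} (hf : Differentiable ℂ f)
    (hper : ∀ ω ∈ L.lattice, ∀ z, f (z + ω) = f z) (z w : ℂ) : f z = f w := by
  have hfract : ∀ z, f (ZSpan.fract L.basis z) = f z := fun z => by
    rw [ZSpan.fract_apply, sub_eq_add_neg]
    refine hper _ (neg_mem ?_) z
    rw [L.lattice_eq_span_range_basis]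
    exact (ZSpan.floor L.basis z).2
  refine hf.apply_eq_apply_of_bounded ?_ z w
  refine (((ZSpan.fundamentalDomain_isBounded L.basis).isCompact_closure.image
    hf.continuous).isBounded.subset ?_)
  rintro - ⟨z, rfl⟩
  exact ⟨_, subset_closure (ZSpan.fract_mem_fundamentalDomain L.basis z), hfract z⟩

theorem exists_eq_smul_add_of_differentiable [CompleteSpace F] {f : ℂ → F}
    (hf : Differentiable ℂ f) (hper : ∀ ω ∈ L.lattice, ∃ c, ∀ z, f (z + ω) = f z + c) :
    ∃ a b : F, ∀ z, f z = z • a + b := by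
  have hderiv : ∀ ω ∈ L.lattice, ∀ z, deriv f (z + ω) = deriv f z := fun ω hω z => by
    obtain ⟨c, hc⟩ := hper ω hω
    rw [← deriv_comp_add_const, funext hc, deriv_add_const]
  have hf' : Differentiable ℂ (deriv f) := fun z => (hf.analyticAt z).deriv.differentiableAt
  set a := deriv f 0
  have hconst : ∀ z w, f z - z • a = f w - w • a := by
    refine is_const_of_deriv_eq_zero (hf.sub (by fun_prop)) fun z => ?_
    rw [deriv_fun_sub (hf z) (by fun_prop), deriv_smul_const differentiableAt_id, deriv_id'',
      one_smul, L.apply_eq_apply_of_differentiable hf' hderiv z 0, sub_self]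
  exact ⟨a, f 0, fun z => by simpa [sub_eq_iff_eq_add'] using hconst z 0⟩

def ofImPos (τ : ℂ) (hτ : 0 < τ.im) : PeriodPair where
  ω₁ := τ
  ω₂ := 1
  indep := LinearIndependent.pair_iff.mpr fun s t h => by
    have hs : s = 0 := by simpa [hτ.ne'] using congrArg Complex.im h
    subst hs
    simpa using h

theorem forall_mem_lattice_ofImPos {τ : ℂ} (hτ : 0 < τ.im) {P : ℂ → Prop} :
    (∀ ω ∈ (ofImPos τ hτ).lattice, P ω) ↔ ∀ m n : ℤ, P (m * τ + n) := by
  simp only [mem_lattice, forall_exists_index]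
  refine ⟨fun h m n => ?_, fun h ω m n hω => ?_⟩
  · exact h _ m n (by simp [ofImPos])
  · subst hω
    simpa [ofImPos] using h m n

end PeriodPair

def affineSection (c₁ c₂ b : ℂ) : ℂ → ℂ × ℂ × ℂ := fun z => (c₁, c₂, -c₁ * z + b)

section

variable {τ' : ℂ} {μ : Matrix (Fin 2) (Fin 2) ℝ}

theorem satisfiesRho_affineSection {c₁ c₂ : ℂ}
    (h : (μ 0 0 : ℂ) * c₁ + (μ 1 0 : ℂ) * c₂ = τ' * c₁) (b : ℂ) :
    SatisfiesRho τ' μ (affineSection c₁ c₂ b) := by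
  refine ⟨by unfold affineSection; fun_prop, fun m n z => ⟨rfl, rfl, ?_⟩⟩
  simp only [affineSection]
  linear_combination (m : ℂ) * h

theorem SatisfiesRho.exists_eq_affineSection (hτ' : 0 < τ'.im) {f : ℂ → ℂ × ℂ × ℂ}
    (hf : SatisfiesRho τ' μ f) :
    ∃ c₁ c₂ b : ℂ, (μ 0 0 : ℂ) * c₁ + (μ 1 0 : ℂ) * c₂ = τ' * c₁ ∧
      f = affineSection c₁ c₂ b := by
  obtain ⟨hd, hper⟩ := hf
  set L := PeriodPair.ofImPos τ' hτ'
  have hshift (m n : ℤ) (z : ℂ) : z + (m * τ' + n) = z + m * τ' + n := (add_assoc ..).symm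
  set c₁ := (f 0).1
  set c₂ := (f 0).2.1
  have hc₁ (z : ℂ) : (f z).1 = c₁ :=
    L.apply_eq_apply_of_differentiable hd.fst ((PeriodPair.forall_mem_lattice_ofImPos hτ').mpr
      fun m n z => by simp only [hshift, (hper m n z).1]) z 0
  have hc₂ (z : ℂ) : (f z).2.1 = c₂ :=
    L.apply_eq_apply_of_differentiable hd.snd.fst ((PeriodPair.forall_mem_lattice_ofImPos hτ').mpr
      fun m n z => by simp only [hshift, (hper m n z).2.1]) z 0
  obtain ⟨a, b, hab⟩ := L.exists_eq_smul_add_of_differentiable hd.snd.snd <|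
    (PeriodPair.forall_mem_lattice_ofImPos hτ').mpr fun m n =>
      ⟨-((m : ℂ) * (μ 0 0 : ℂ) + (n : ℂ)) * c₁ - (m : ℂ) * (μ 1 0 : ℂ) * c₂, fun z => by
        simp only [hshift, (hper m n z).2.2, hc₁, hc₂]; ring⟩
  have ha : a = -c₁ := by
    have h := (hper 0 1 0).2.2
    simp only [hab, hc₁, hc₂, smul_eq_mul] at h
    push_cast at h
    linear_combination h
  refine ⟨c₁, c₂, b, ?_, funext fun z => Prod.ext (hc₁ z) (Prod.ext (hc₂ z) ?_)⟩
  · have h := (hper 1 0 0).2.2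
    simp only [hab, hc₁, hc₂, smul_eq_mul, ha] at h
    push_cast at h
    linear_combination h
  · simp only [affineSection, hab, ha, smul_eq_mul]
    ring

theorem satisfiesRho_iff (hτ' : 0 < τ'.im) {τ : ℂ}
    (h1 : (μ 0 0 : ℂ) * τ + (μ 0 1 : ℂ) = τ' * τ) (h2 : (μ 1 0 : ℂ) * τ + (μ 1 1 : ℂ) = τ')
    (f : ℂ → ℂ × ℂ × ℂ) :
    SatisfiesRho τ' μ f ↔
      ∃ c₁ c₂ b : ℂ,
        ((μ 0 0 : ℂ) * c₁ + (μ 1 0 : ℂ) * c₂ = τ' * c₁ ∧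
         (μ 0 1 : ℂ) * c₁ + (μ 1 1 : ℂ) * c₂ = τ' * c₂) ∧
        ∀ z : ℂ, f z = (c₁, c₂, -c₁ * z + b) := by
  refine ⟨fun hf => ?_, fun ⟨c₁, c₂, b, ⟨e1, _⟩, hf⟩ => ?_⟩
  · obtain ⟨c₁, c₂, b, e1, rfl⟩ := hf.exists_eq_affineSection hτ'
    -- `(μᵗ c - τ' c) ⬝ (τ, 1) = c ⬝ (μ - τ') (τ, 1) = 0`, and `e1` kills the first coordinate
    exact ⟨c₁, c₂, b, ⟨e1, by linear_combination c₁ * h1 + c₂ * h2 - τ * e1⟩, fun _ => rfl⟩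
  · rw [show f = affineSection c₁ c₂ b from funext hf]
    exact satisfiesRho_affineSection e1 b

end

theorem sections_on_elliptic_curve_in_fiber_general
    (μ : Matrix (Fin 2) (Fin 2) ℝ) (τ τ' : ℂ)
    (hτ' : 0 < τ'.im)
    (h1 : (μ 0 0 : ℂ) * τ + (μ 0 1 : ℂ) = τ' * τ)
    (h2 : (μ 1 0 : ℂ) * τ + (μ 1 1 : ℂ) = τ') :
    (∀ f : ℂ → ℂ × ℂ × ℂ, SatisfiesRho τ' μ f ↔
      ∃ c₁ c₂ b : ℂ,
        ((μ 0 0 : ℂ) * c₁ + (μ 1 0 : ℂ) * c₂ = τ' * c₁ ∧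
         (μ 0 1 : ℂ) * c₁ + (μ 1 1 : ℂ) * c₂ = τ' * c₂) ∧
        ∀ z : ℂ, f z = (c₁, c₂, -c₁ * z + b)) ∧
    (∃ g₁ g₂ : ℂ → ℂ × ℂ × ℂ,
      SatisfiesRho τ' μ g₁ ∧ SatisfiesRho τ' μ g₂ ∧
      LinearIndependent ℂ ![g₁, g₂] ∧
      ∀ f, SatisfiesRho τ' μ f → ∃ a b : ℂ, f = a • g₁ + b • g₂) := by
  have hsol := satisfiesRho_iff hτ' h1 h2
  have hμ : (μ 1 0 : ℂ) ≠ 0 := fun h0 => by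
    have : τ' = (μ 1 1 : ℂ) := by rw [← h2, h0, zero_mul, zero_add]
    exact hτ'.ne' (by simp [this])
  have heigen : (μ 0 0 : ℂ) * μ 1 0 + μ 1 0 * (τ' - μ 0 0) = τ' * μ 1 0 := by ring
  refine ⟨hsol, affineSection (μ 1 0) (τ' - μ 0 0) 0, affineSection 0 0 1,
    satisfiesRho_affineSection heigen 0, satisfiesRho_affineSection (by ring) 1, ?_, fun f hf => ?_⟩
  · refine linearIndependent_fin2.mpr ⟨fun h => ?_, fun a h => hμ ?_⟩
    · simpa [affineSection] using congrFun h 0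
    · simpa [affineSection] using (congrArg Prod.fst (congrFun h 0)).symm
  · obtain ⟨c₁, c₂, b, ⟨e1, -⟩, hf⟩ := (hsol f).mp hf
    refine ⟨c₁ / μ 1 0, b, funext fun z => ?_⟩
    simp only [hf, affineSection, Pi.add_apply, Pi.smul_apply, Prod.smul_mk, smul_eq_mul,
      Prod.mk_add_mk]
    refine Prod.ext ?_ (Prod.ext ?_ ?_) <;> field_simp
    · ring
    · linear_combination e1
    · ring

theorem sections_on_elliptic_curve_in_fiber
    (μ : Matrix (Fin 2) (Fin 2) ℝ) (τ τ' : ℂ)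
    (hτ : 0 < τ.im) (hτ' : 0 < τ'.im)
    (h1 : (μ 0 0 : ℂ) * τ + (μ 0 1 : ℂ) = τ' * τ)
    (h2 : (μ 1 0 : ℂ) * τ + (μ 1 1 : ℂ) = τ') :
    (∀ f : ℂ → ℂ × ℂ × ℂ, SatisfiesRho τ' μ f ↔
      ∃ c₁ c₂ b : ℂ,
        ((μ 0 0 : ℂ) * c₁ + (μ 1 0 : ℂ) * c₂ = τ' * c₁ ∧
         (μ 0 1 : ℂ) * c₁ + (μ 1 1 : ℂ) * c₂ = τ' * c₂) ∧
        ∀ z : ℂ, f z = (c₁, c₂, -c₁ * z + b)) ∧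
    (∃ g₁ g₂ : ℂ → ℂ × ℂ × ℂ,
      SatisfiesRho τ' μ g₁ ∧ SatisfiesRho τ' μ g₂ ∧
      LinearIndependent ℂ ![g₁, g₂] ∧
      ∀ f, SatisfiesRho τ' μ f → ∃ a b : ℂ, f = a • g₁ + b • g₂) :=
  sections_on_elliptic_curve_in_fiber_general μ τ τ' hτ' h1 h2
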